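/- If φ: M → M is an expansive homeomorphism of a compact metric space with expansive constant c > 0, and 𝓡 is a topological partition of M with diameter d(𝓡) < c, then 𝓡 is a generator, i.e., lim_{n→∞} d(⋁_{k=-n}^{n} φᵏ𝓡) = 0. -/

import Mathlib

open Filter

/-- A topological partition: a finite family of pairwise disjoint open sets
whose closures cover the space. -/
def IsTopPartition {M : Type*} [TopologicalSpace M] {ι : Type*} [Fintype ι]
    (R : ι → Set M) : Prop :=
  (∀ i, IsOpen (R i)) ∧
  (∀ i j, i ≠ j → R i ∩ R j = ∅) ∧
  (⋃ i, closure (R i)) = Set.univ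

open scoped ENNReal

/-!
Expansiveness is uniform on a compact space: the closed sets of pairs whose orbits stay
`d`-close (for a fixed `d < c`) on the window `[-n, n]` decrease to the diagonal, so by
compactness they eventually lie in any `ε`-neighbourhood of it. Two points of a member
`⋂_{|k| ≤ n} φᵏ R_{x(k)}` of the refinement have, for each `|k| ≤ n`, their `k`-th iterates in a
common member of `𝓡`, hence `d`-close once `d < c` bounds the finitely many diameters.
-/

theorem Finite.exists_lt_forall_le {ι β : Type*} [Finite ι] [LinearOrder β] [NoMinOrder β]
    {f : ι → β} {c : β} (h : ∀ i, f i < c) : ∃ d < c, ∀ i, f i ≤ d := by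
  cases isEmpty_or_nonempty ι
  · obtain ⟨d, hd⟩ := exists_lt c
    exact ⟨d, hd, isEmptyElim⟩
  · obtain ⟨i, hi⟩ := Finite.exists_max f
    exact ⟨f i, h i, hi⟩

theorem Homeomorph.continuous_toEquiv_zpow {X : Type*} [TopologicalSpace X] (φ : X ≃ₜ X)
    (k : ℤ) : Continuous ⇑(φ.toEquiv ^ k) := by
  induction k using Int.induction_on with
  | zero => exact continuous_id
  | succ k ih =>
    rw [zpow_add_one, Equiv.Perm.coe_mul]
    exact ih.comp φ.continuous
  | pred k ih =>
    rw [zpow_sub_one, Equiv.Perm.coe_mul]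
    exact ih.comp φ.symm.continuous

theorem Equiv.Perm.zpow_apply_mem_of_mem_iInter_image {α : Type*} (e : Equiv.Perm α)
    {S : ℤ → Set α} {n k : ℤ} {p : α} (hp : p ∈ ⋂ j ∈ Finset.Icc (-n) n, (e ^ j) '' S j)
    (hk : k ∈ Finset.Icc (-n) n) : (e ^ k) p ∈ S (-k) := by
  have hk' : -k ∈ Finset.Icc (-n) n := by
    rw [Finset.mem_Icc] at hk ⊢
    omega
  have hp' := Set.mem_iInter₂.mp hp (-k) hk'
  rwa [Equiv.image_eq_preimage_symm, Set.mem_preimage, ← Equiv.Perm.inv_def, zpow_neg,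
    inv_inv] at hp'

theorem eventually_forall_edist_lt_of_separating {M : Type*} [MetricSpace M] [CompactSpace M]
    {f : ℤ → M → M} (hf : ∀ k, Continuous (f k)) {d : ℝ}
    (hsep : ∀ p q, (∀ k, dist (f k p) (f k q) ≤ d) → p = q) {ε : ℝ≥0∞} (hε : 0 < ε) :
    ∀ᶠ n : ℕ in atTop, ∀ p q : M,
      (∀ k ∈ Finset.Icc (-(n : ℤ)) n, dist (f k p) (f k q) ≤ d) → edist p q < ε := by
  set K : ℕ → Set (M × M) :=
    fun n => ⋂ k ∈ Finset.Icc (-(n : ℤ)) n, {z | dist (f k z.1) (f k z.2) ≤ d}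
  have hK_closed : ∀ n, IsClosed (K n) := fun n =>
    isClosed_biInter fun k _ =>
      isClosed_le (f := fun z : M × M => dist (f k z.1) (f k z.2))
        (((hf k).comp continuous_fst).dist ((hf k).comp continuous_snd)) continuous_const
  have hK_anti : Antitone K := fun n n' hnn' =>
    Set.biInter_subset_biInter_left (Finset.Icc_subset_Icc (by omega) (by omega))
  have hfar_compact : IsCompact {z : M × M | ε ≤ edist z.1 z.2} :=
    (isClosed_le continuous_const continuous_edist).isCompact
  have hdiag : {z : M × M | ε ≤ edist z.1 z.2} ∩ ⋂ n, K n = ∅ := by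
    refine Set.eq_empty_of_forall_notMem fun ⟨p, q⟩ ⟨hpq, hK⟩ => ?_
    have hK' := Set.mem_iInter.mp hK
    have : p = q := hsep p q fun k =>
      Set.mem_iInter₂.mp (hK' k.natAbs) k (by rw [Finset.mem_Icc]; omega)
    have hpq : ε ≤ edist p q := hpq
    rw [this, edist_self] at hpq
    exact hε.not_ge hpq
  obtain ⟨N, hN⟩ := hfar_compact.elim_directed_family_closed K hK_closed hdiag hK_anti.directed_ge
  filter_upwards [eventually_ge_atTop N] with n hn p q hpq
  by_contra! hfar_pq
  exact Set.eq_empty_iff_forall_notMem.mp hN (p, q)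
    ⟨hfar_pq, hK_anti hn (Set.mem_iInter₂.mpr hpq)⟩

theorem expansive_partition_is_generator_general {M : Type*} [MetricSpace M] [CompactSpace M]
    (φ : M ≃ₜ M) (c : ℝ)
    (hexp : ∀ p q : M, (∀ n : ℤ, dist ((φ.toEquiv ^ n) p) ((φ.toEquiv ^ n) q) < c) → p = q)
    {m : ℕ} (R : Fin m → Set M)
    (hdiam : ∀ i, Metric.diam (R i) < c) :
    Tendsto (fun n : ℕ =>
        ⨆ x : ℤ → Fin m,
          EMetric.diam (⋂ k ∈ Finset.Icc (-(n : ℤ)) (n : ℤ), (φ.toEquiv ^ k) '' R (x k)))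
      atTop (nhds 0) := by
  obtain ⟨d, hdc, hRd⟩ := Finite.exists_lt_forall_le hdiam
  have hsep : ∀ p q, (∀ k : ℤ, dist ((φ.toEquiv ^ k) p) ((φ.toEquiv ^ k) q) ≤ d) → p = q :=
    fun p q h => hexp p q fun k => (h k).trans_lt hdc
  rw [ENNReal.tendsto_nhds_zero]
  intro ε hε
  filter_upwards [eventually_forall_edist_lt_of_separating φ.continuous_toEquiv_zpow hsep hε]
    with n hn
  refine iSup_le fun x => Metric.ediam_le fun p hp q hq => (hn p q fun k hk => ?_).le
  calc dist ((φ.toEquiv ^ k) p) ((φ.toEquiv ^ k) q) ≤ Metric.diam (R (x (-k))) :=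
        Metric.dist_le_diam_of_mem Metric.isBounded_of_compactSpace
          (Equiv.Perm.zpow_apply_mem_of_mem_iInter_image _ hp hk)
          (Equiv.Perm.zpow_apply_mem_of_mem_iInter_image _ hq hk)
    _ ≤ d := hRd _

/-- If `φ` is an expansive homeomorphism of a compact metric space with
expansive constant `c > 0` and `𝓡` is a topological partition of diameter
less than `c`, then `𝓡` is a generator: the diameters of the members of the
iterated refinements `⋁_{k=-n}^{n} φᵏ𝓡` tend to `0`. -/
theorem expansive_partition_is_generator {M : Type*} [MetricSpace M] [CompactSpace M]
    (φ : M ≃ₜ M) (c : ℝ) (hc : 0 < c)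
    (hexp : ∀ p q : M, (∀ n : ℤ, dist ((φ.toEquiv ^ n) p) ((φ.toEquiv ^ n) q) < c) → p = q)
    {m : ℕ} (R : Fin m → Set M) (hR : IsTopPartition R)
    (hdiam : ∀ i, Metric.diam (R i) < c) :
    Tendsto (fun n : ℕ =>
        ⨆ x : ℤ → Fin m,
          EMetric.diam (⋂ k ∈ Finset.Icc (-(n : ℤ)) (n : ℤ), (φ.toEquiv ^ k) '' R (x k)))
      atTop (nhds 0) :=
  expansive_partition_is_generator_general φ c hexp R hdiam
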